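/- Let (G,T) be a terminal network and e ∈ E(G). Then e is essential for (G,T) if and only if there exists a partition 𝒯 of T such that every minimum multiway cut for 𝒯 in G contains e. -/

import Mathlib

open Finset

variable {V : Type}

/-- Total capacity of a terminal set: sum of degrees. -/
def capacity [Fintype V] (G : SimpleGraph V) [DecidableRel G.Adj] (T : Finset V) : ℕ :=
  ∑ t ∈ T, G.degree t

/-- `P` is a partition of the set `T` into nonempty parts. -/
def IsPartitionOn (T : Set V) (P : Set (Set V)) : Prop :=
  (∀ p ∈ P, p.Nonempty ∧ p ⊆ T) ∧ ∀ t ∈ T, ∃! p, p ∈ P ∧ t ∈ p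

/-- `X` is a multiway cut for the partition `P` in `G`: no component of `G - X`
contains terminals from two distinct parts. -/
def IsMultiwayCut (G : SimpleGraph V) (P : Set (Set V)) (X : Finset (Sym2 V)) : Prop :=
  ↑X ⊆ G.edgeSet ∧ ∀ u v : V, ∀ p ∈ P, ∀ q ∈ P, u ∈ p → v ∈ q →
    (G.deleteEdges ↑X).Reachable u v → p = q

def IsMinMultiwayCut (G : SimpleGraph V) (P : Set (Set V)) (X : Finset (Sym2 V)) : Prop :=
  IsMultiwayCut G P X ∧ ∀ Y : Finset (Sym2 V), IsMultiwayCut G P Y → X.card ≤ Y.card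

/-- `R` is a set of cut requests over `T`: unordered pairs of distinct terminals. -/
def CutRequests (T : Set V) (R : Set (Sym2 V)) : Prop :=
  ∀ r ∈ R, ¬ r.IsDiag ∧ ∀ v ∈ r, v ∈ T

/-- `X` is a multicut for the requests `R` in `G`. -/
def IsMulticut (G : SimpleGraph V) (R : Set (Sym2 V)) (X : Finset (Sym2 V)) : Prop :=
  ↑X ⊆ G.edgeSet ∧ ∀ u v : V, s(u, v) ∈ R → ¬ (G.deleteEdges ↑X).Reachable u v

def IsMinMulticut (G : SimpleGraph V) (R : Set (Sym2 V)) (X : Finset (Sym2 V)) : Prop :=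
  IsMulticut G R X ∧ ∀ Y : Finset (Sym2 V), IsMulticut G R Y → X.card ≤ Y.card

/-- An edge is essential for `(G,T)` if for some set of cut requests over `T`,
every minimum multicut contains it. -/
def Essential (G : SimpleGraph V) (T : Set V) (e : Sym2 V) : Prop :=
  ∃ R : Set (Sym2 V), CutRequests T R ∧ ∀ X : Finset (Sym2 V), IsMinMulticut G R X → e ∈ X

/-- The edge boundary of `S`: edges with exactly one endpoint in `S`. -/
def edgeBoundary [Fintype V] [DecidableEq V] (G : SimpleGraph V) [DecidableRel G.Adj]
    (S : Finset V) : Finset (Sym2 V) :=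
  G.edgeFinset.filter (fun e => ∃ u v : V, e = s(u, v) ∧ u ∈ S ∧ v ∉ S)

/-- `cap_T(S) = cap_G(T ∩ S) + δ_G(S)`. -/
def capT [Fintype V] [DecidableEq V] (G : SimpleGraph V) [DecidableRel G.Adj]
    (T S : Finset V) : ℕ :=
  capacity G (T ∩ S) + (edgeBoundary G S).card

/-- `X` is an `(A,B)`-edge cut in `G`. -/
def IsEdgeCut (G : SimpleGraph V) (A B : Finset V) (X : Finset (Sym2 V)) : Prop :=
  ↑X ⊆ G.edgeSet ∧ ∀ a ∈ A, ∀ b ∈ B, ¬ (G.deleteEdges ↑X).Reachable a b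

def IsMinEdgeCut (G : SimpleGraph V) (A B : Finset V) (X : Finset (Sym2 V)) : Prop :=
  IsEdgeCut G A B X ∧ ∀ Y : Finset (Sym2 V), IsEdgeCut G A B Y → X.card ≤ Y.card


/-- The closed neighborhood `N_G[S]`. -/
def closedNbhd (G : SimpleGraph V) (S : Set V) : Set V :=
  S ∪ {v | ∃ u ∈ S, G.Adj u v}

/-- The (exterior) open neighborhood `N_G(S)`. -/
def extNbhd [Fintype V] [DecidableEq V] (G : SimpleGraph V) [DecidableRel G.Adj]
    (S : Finset V) : Finset V :=
  Finset.univ.filter (fun v => v ∉ S ∧ ∃ u ∈ S, G.Adj u v)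

/-- The graph `G_S`: the edges of `G` with at least one endpoint in `S`
(vertices outside `N_G[S]` are isolated). -/
def recGraph [DecidableEq V] (G : SimpleGraph V) (S : Finset V) : SimpleGraph V where
  Adj u v := G.Adj u v ∧ (u ∈ S ∨ v ∈ S)
  symm := ⟨fun u v h => ⟨h.1.symm, h.2.symm⟩⟩
  loopless := ⟨fun v h => G.irrefl h.1⟩

instance [DecidableEq V] (G : SimpleGraph V) [DecidableRel G.Adj] (S : Finset V) :
    DecidableRel (recGraph G S).Adj :=
  fun u v => inferInstanceAs (Decidable (G.Adj u v ∧ (u ∈ S ∨ v ∈ S)))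

/-- The terminal set `T(S) = (T ∩ S) ∪ N_G(S)` of the recursive instance at `S`. -/
def recTerminals [Fintype V] [DecidableEq V] (G : SimpleGraph V) [DecidableRel G.Adj]
    (T S : Finset V) : Finset V :=
  (T ∩ S) ∪ extNbhd G S

/-- An indexed partition `T = T_1 ∪ ... ∪ T_s` of `T` into nonempty disjoint parts. -/
def IsIndexedPartition [DecidableEq V] (T : Finset V) {s : ℕ} (Tp : Fin s → Finset V) : Prop :=
  (∀ i, (Tp i).Nonempty) ∧ (∀ i j, i ≠ j → Disjoint (Tp i) (Tp j)) ∧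
    Finset.univ.biUnion Tp = T

def IsMultiwayCutFam (G : SimpleGraph V) {s : ℕ} (Tp : Fin s → Finset V)
    (X : Finset (Sym2 V)) : Prop :=
  ↑X ⊆ G.edgeSet ∧ ∀ i j : Fin s, i ≠ j → ∀ u ∈ Tp i, ∀ v ∈ Tp j,
    ¬ (G.deleteEdges ↑X).Reachable u v

/-- The set `E(T,V)` of edges incident to at least one terminal. -/
def terminalEdges [Fintype V] [DecidableEq V] (G : SimpleGraph V) [DecidableRel G.Adj]
    (T : Finset V) : Finset (Sym2 V) :=
  G.edgeFinset.filter (fun e => ∃ t ∈ T, t ∈ e)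

/-- Independence of the columns indexed by the finite set `X` in the
linear representation `v`. -/
def FIndep (F : Type) [Field F] {W E : Type} [AddCommGroup W] [Module F W]
    (v : E → W) (X : Finset E) : Prop :=
  LinearIndependent F (fun x : {a // a ∈ X} => v x.1)

/-! A partition `P` of `T` and a set `R` of cut requests over `T` translate into each other:
`P` yields the requests separating its distinct parts, and a minimum multicut `X` for `R`
yields the partition of `T` by the components of `G - X`. Multiway cuts for `P` are exactly
multicuts for its requests, and every minimum multiway cut for the components of `G - X` is
again a minimum multicut for `R`, since `X` itself is such a multiway cut. -/

def crossRequests (P : Set (Set V)) : Set (Sym2 V) :=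
  {r | ∃ p ∈ P, ∃ q ∈ P, p ≠ q ∧ ∃ u ∈ p, ∃ v ∈ q, r = s(u, v)}

namespace SimpleGraph

def terminalClass (H : SimpleGraph V) (T : Set V) (u : V) : Set V :=
  {t | t ∈ T ∧ H.Reachable t u}

def terminalClasses (H : SimpleGraph V) (T : Set V) : Set (Set V) :=
  H.terminalClass T '' T

variable {G H : SimpleGraph V} {T : Set V}

lemma terminalClass_eq_of_mem {u t : V} (ht : t ∈ H.terminalClass T u) :
    H.terminalClass T u = H.terminalClass T t :=
  Set.ext fun _ => and_congr_right fun _ =>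
    ⟨fun h => h.trans ht.2.symm, fun h => h.trans ht.2⟩

lemma mem_terminalClass_self {u : V} (hu : u ∈ T) : u ∈ H.terminalClass T u :=
  ⟨hu, Reachable.refl u⟩

lemma isPartitionOn_terminalClasses : IsPartitionOn T (H.terminalClasses T) := by
  refine ⟨?_, fun t ht =>
    ⟨H.terminalClass T t, ⟨⟨t, ht, rfl⟩, mem_terminalClass_self ht⟩, ?_⟩⟩
  · rintro _ ⟨u, hu, rfl⟩
    exact ⟨⟨u, mem_terminalClass_self hu⟩, fun _ ht => ht.1⟩
  · rintro _ ⟨⟨u, -, rfl⟩, ht⟩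
    exact terminalClass_eq_of_mem ht

lemma isMultiwayCut_terminalClasses {X : Finset (Sym2 V)} (hX : ↑X ⊆ G.edgeSet) :
    IsMultiwayCut G ((G.deleteEdges ↑X).terminalClasses T) X := by
  refine ⟨hX, ?_⟩
  rintro u v _ ⟨a, -, rfl⟩ _ ⟨b, -, rfl⟩ hu hv huv
  rw [terminalClass_eq_of_mem hu, terminalClass_eq_of_mem hv,
    terminalClass_eq_of_mem ⟨hu.1, huv⟩]

end SimpleGraph

section

open SimpleGraph

variable {G : SimpleGraph V} {T : Set V}

lemma isMulticut_crossRequests_iff {P : Set (Set V)} {X : Finset (Sym2 V)} :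
    IsMulticut G (crossRequests P) X ↔ IsMultiwayCut G P X := by
  refine and_congr_right fun _ => ⟨fun hsep u v p hp q hq hu hv hreach => ?_, ?_⟩
  · by_contra hpq
    exact hsep u v ⟨p, hp, q, hq, hpq, u, hu, v, hv, rfl⟩ hreach
  · rintro hmw u v ⟨p, hp, q, hq, hpq, u', hu', v', hv', huv⟩ hreach
    rcases Sym2.eq_iff.mp huv with ⟨rfl, rfl⟩ | ⟨rfl, rfl⟩
    · exact hpq (hmw u v p hp q hq hu' hv' hreach)
    · exact hpq (hmw v u p hp q hq hu' hv' hreach.symm)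

lemma isMinMulticut_crossRequests_iff {P : Set (Set V)} {X : Finset (Sym2 V)} :
    IsMinMulticut G (crossRequests P) X ↔ IsMinMultiwayCut G P X := by
  simp only [IsMinMulticut, IsMinMultiwayCut, isMulticut_crossRequests_iff]

lemma cutRequests_crossRequests {P : Set (Set V)} (hP : IsPartitionOn T P) :
    CutRequests T (crossRequests P) := by
  rintro r ⟨p, hp, q, hq, hpq, u, hu, v, hv, rfl⟩
  refine ⟨fun huv => hpq ?_, fun w hw => ?_⟩
  · obtain rfl : u = v := Sym2.mk_isDiag_iff.mp huv
    obtain ⟨w, -, hw⟩ := hP.2 u ((hP.1 p hp).2 hu)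
    exact (hw p ⟨hp, hu⟩).trans (hw q ⟨hq, hv⟩).symm
  · rcases Sym2.mem_iff.mp hw with rfl | rfl
    exacts [(hP.1 p hp).2 hu, (hP.1 q hq).2 hv]

lemma IsMulticut.of_isMultiwayCut_terminalClasses {R : Set (Sym2 V)} {X Y : Finset (Sym2 V)}
    (hR : CutRequests T R) (hX : IsMulticut G R X)
    (hY : IsMultiwayCut G ((G.deleteEdges ↑X).terminalClasses T) Y) : IsMulticut G R Y := by
  refine ⟨hY.1, fun u v huv hreach => hX.2 u v huv ?_⟩
  have huT : u ∈ T := (hR _ huv).2 u (Sym2.mem_mk_left u v)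
  have hvT : v ∈ T := (hR _ huv).2 v (Sym2.mem_mk_right u v)
  have hclass := hY.2 u v _ ⟨u, huT, rfl⟩ _ ⟨v, hvT, rfl⟩
    (mem_terminalClass_self huT) (mem_terminalClass_self hvT) hreach
  have hu : u ∈ (G.deleteEdges ↑X).terminalClass T v := hclass ▸ mem_terminalClass_self huT
  exact hu.2

lemma IsMinMulticut.of_isMinMultiwayCut_terminalClasses {R : Set (Sym2 V)}
    {X Y : Finset (Sym2 V)} (hR : CutRequests T R) (hX : IsMinMulticut G R X)
    (hY : IsMinMultiwayCut G ((G.deleteEdges ↑X).terminalClasses T) Y) :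
    IsMinMulticut G R Y := by
  have hYX : Y.card ≤ X.card := hY.2 X (isMultiwayCut_terminalClasses hX.1.1)
  exact ⟨IsMulticut.of_isMultiwayCut_terminalClasses hR hX.1 hY.1,
    fun Z hZ => hYX.trans (hX.2 Z hZ)⟩

lemma isMulticut_edgeFinset [Fintype G.edgeSet] {R : Set (Sym2 V)}
    (hR : ∀ r ∈ R, ¬ r.IsDiag) : IsMulticut G R G.edgeFinset := by
  refine ⟨by rw [coe_edgeFinset], fun u v huv hreach => hR _ huv ?_⟩
  rw [coe_edgeFinset, deleteEdges_edgeSet, sdiff_self, reachable_bot] at hreach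
  exact Sym2.mk_isDiag_iff.mpr hreach

lemma IsMulticut.exists_isMinMulticut {R : Set (Sym2 V)} {X : Finset (Sym2 V)}
    (hX : IsMulticut G R X) : ∃ Y, IsMinMulticut G R Y := by
  obtain ⟨Y, hY, hmin⟩ := (measure Finset.card).wf.has_min {Y | IsMulticut G R Y} ⟨X, hX⟩
  exact ⟨Y, hY, fun Z hZ => not_lt.mp (hmin Z hZ)⟩

end

theorem essential_iff_exists_partition_general [Fintype V]
    (G : SimpleGraph V) (T : Finset V) (e : Sym2 V) :
    Essential G (↑T) e ↔
      ∃ P : Set (Set V), IsPartitionOn (↑T) P ∧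
        ∀ X : Finset (Sym2 V), IsMinMultiwayCut G P X → e ∈ X := by
  classical
  constructor
  · rintro ⟨R, hR, hessential⟩
    have hedges : IsMulticut G R G.edgeFinset :=
      isMulticut_edgeFinset fun r hr => (hR r hr).1
    obtain ⟨X, hX⟩ := hedges.exists_isMinMulticut
    exact ⟨_, SimpleGraph.isPartitionOn_terminalClasses,
      fun Y hY => hessential Y (hX.of_isMinMultiwayCut_terminalClasses hR hY)⟩
  · rintro ⟨P, hP, hcut⟩
    exact ⟨crossRequests P, cutRequests_crossRequests hP,
      fun X hX => hcut X (isMinMulticut_crossRequests_iff.mp hX)⟩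

/-- An edge `e` of `G` is essential for `(G,T)` iff there is a
partition `𝒯` of `T` such that every minimum multiway cut for `𝒯` contains `e`. -/
theorem essential_iff_exists_partition [Fintype V]
    (G : SimpleGraph V) (T : Finset V) (e : Sym2 V) (he : e ∈ G.edgeSet) :
    Essential G (↑T) e ↔
      ∃ P : Set (Set V), IsPartitionOn (↑T) P ∧
        ∀ X : Finset (Sym2 V), IsMinMultiwayCut G P X → e ∈ X :=
  essential_iff_exists_partition_general G T e
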